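/- arXiv:2604.19703 — 2 statements merged into one kernel-verified Lean document; each statement's English description precedes it below -/
import Mathlib

section
/- The number of 4-cycle decompositions of Q³(L₁,L₂,L₃) (all Lᵢ even, 4 ≤ L₁ ≤ L₂ ≤ L₃) is at least 2^{L₂L₃/4}. -/
def cycleG (L : ℕ) : SimpleGraph (ZMod L) :=
  SimpleGraph.fromRel (fun x y => x - y = 1)

abbrev QV (L₁ L₂ L₃ : ℕ) := ZMod L₁ × ZMod L₂ × ZMod L₃

def Q3 (L₁ L₂ L₃ : ℕ) : SimpleGraph (QV L₁ L₂ L₃) :=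
  (cycleG L₁).boxProd ((cycleG L₂).boxProd (cycleG L₃))

def IsFourCycleEdgeSet {V : Type*} (G : SimpleGraph V) (s : Set (Sym2 V)) : Prop :=
  ∃ (v : V) (w : G.Walk v v), w.IsCycle ∧ w.length = 4 ∧ {e | e ∈ w.edges} = s

def IsFourCycleDecomp {V : Type*} (G : SimpleGraph V) (D : Set (Set (Sym2 V))) : Prop :=
  (∀ s ∈ D, IsFourCycleEdgeSet G s) ∧ D.Pairwise Disjoint ∧ ⋃₀ D = G.edgeSet

namespace Q3P

lemma one_ne {L : ℕ} (hL : 2 ≤ L) : (1 : ZMod L) ≠ 0 := by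
  have : ((1:ℕ) : ZMod L) ≠ 0 := by
    haveI : NeZero L := ⟨by omega⟩
    rw [Ne, ZMod.natCast_eq_zero_iff]
    intro h; have := Nat.le_of_dvd one_pos h; omega
  simpa using this

lemma two_ne {L : ℕ} (hL : 3 ≤ L) : (2 : ZMod L) ≠ 0 := by
  have : ((2:ℕ) : ZMod L) ≠ 0 := by
    haveI : NeZero L := ⟨by omega⟩
    rw [Ne, ZMod.natCast_eq_zero_iff]
    intro h; have := Nat.le_of_dvd two_pos h; omega
  simpa using this

lemma ne_add_one {L : ℕ} (hL : 2 ≤ L) (x : ZMod L) : x ≠ x + 1 := by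
  intro h
  apply one_ne hL
  have : x + 0 = x + 1 := by simpa using h
  exact (add_left_cancel this).symm

lemma cyc_adj {L : ℕ} (hL : 2 ≤ L) (x : ZMod L) : (cycleG L).Adj x (x + 1) := by
  rw [cycleG, SimpleGraph.fromRel_adj]
  exact ⟨ne_add_one hL x, Or.inr (by ring)⟩

variable {L₁ L₂ L₃ : ℕ}

lemma adj1 (h : 2 ≤ L₁) (i : ZMod L₁) (j : ZMod L₂) (k : ZMod L₃) :
    (Q3 L₁ L₂ L₃).Adj (i,j,k) (i+1,j,k) := by
  rw [Q3, SimpleGraph.boxProd_adj]; exact Or.inl ⟨cyc_adj h i, rfl⟩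

lemma adj2 (h : 2 ≤ L₂) (i : ZMod L₁) (j : ZMod L₂) (k : ZMod L₃) :
    (Q3 L₁ L₂ L₃).Adj (i,j,k) (i,j+1,k) := by
  rw [Q3, SimpleGraph.boxProd_adj]
  refine Or.inr ⟨?_, rfl⟩
  rw [SimpleGraph.boxProd_adj]; exact Or.inl ⟨cyc_adj h j, rfl⟩

lemma adj3 (h : 2 ≤ L₃) (i : ZMod L₁) (j : ZMod L₂) (k : ZMod L₃) :
    (Q3 L₁ L₂ L₃).Adj (i,j,k) (i,j,k+1) := by
  rw [Q3, SimpleGraph.boxProd_adj]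
  refine Or.inr ⟨?_, rfl⟩
  rw [SimpleGraph.boxProd_adj]; exact Or.inr ⟨cyc_adj h k, rfl⟩

/-- generic quad cycle -/
lemma isFourCycle_quad {V : Type*} {G : SimpleGraph V} {u v w x : V}
    (huv : G.Adj u v) (hvw : G.Adj v w) (hwx : G.Adj w x) (hxu : G.Adj x u)
    (huw : u ≠ w) (hvx : v ≠ x) :
    IsFourCycleEdgeSet G {s(u,v), s(v,w), s(x,w), s(u,x)} := by
  rw [show s(x,w) = s(w,x) from Sym2.eq_swap, show s(u,x) = s(x,u) from Sym2.eq_swap]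
  have n1 := huv.ne; have n2 := hvw.ne; have n3 := hwx.ne; have n4 := hxu.ne
  refine ⟨u, .cons huv (.cons hvw (.cons hwx hxu.toWalk)), ?_, by simp, ?_⟩
  · rw [SimpleGraph.Walk.isCycle_def]
    refine ⟨?_, by simp, ?_⟩
    · rw [SimpleGraph.Walk.isTrail_def]
      simp [Sym2.eq_iff]
      refine ⟨⟨?_,?_,?_⟩,⟨?_,?_⟩,?_⟩ <;> tauto
    · simp_all
      try tauto
  · ext e; simp [SimpleGraph.Walk.edges_cons]
    try tauto


section edges
variable {L₁ L₂ L₃ : ℕ}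

def e1 (i : ZMod L₁) (j : ZMod L₂) (k : ZMod L₃) : Sym2 (QV L₁ L₂ L₃) := s((i,j,k), (i+1,j,k))
def e2 (i : ZMod L₁) (j : ZMod L₂) (k : ZMod L₃) : Sym2 (QV L₁ L₂ L₃) := s((i,j,k), (i,j+1,k))
def e3 (i : ZMod L₁) (j : ZMod L₂) (k : ZMod L₃) : Sym2 (QV L₁ L₂ L₃) := s((i,j,k), (i,j,k+1))

def F12 (i : ZMod L₁) (j : ZMod L₂) (k : ZMod L₃) : Set (Sym2 (QV L₁ L₂ L₃)) :=
  {e1 i j k, e2 (i+1) j k, e1 i (j+1) k, e2 i j k}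
def F13 (i : ZMod L₁) (j : ZMod L₂) (k : ZMod L₃) : Set (Sym2 (QV L₁ L₂ L₃)) :=
  {e1 i j k, e3 (i+1) j k, e1 i j (k+1), e3 i j k}
def F23 (i : ZMod L₁) (j : ZMod L₂) (k : ZMod L₃) : Set (Sym2 (QV L₁ L₂ L₃)) :=
  {e2 i j k, e3 i (j+1) k, e2 i j (k+1), e3 i j k}

lemma e1_mem_F12 (hL1 : 4 ≤ L₁) (hL2 : 4 ≤ L₂) (hL3 : 4 ≤ L₃)
    {i i' : ZMod L₁} {j j' : ZMod L₂} {k k' : ZMod L₃} :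
    e1 i j k ∈ F12 i' j' k' ↔ i = i' ∧ k = k' ∧ (j = j' ∨ j = j' + 1) := by
  have n11 : (1:ZMod L₁) ≠ 0 := one_ne (by omega)
  have n12 : (1:ZMod L₂) ≠ 0 := one_ne (by omega)
  have n13 : (1:ZMod L₃) ≠ 0 := one_ne (by omega)
  have n21 : (2:ZMod L₁) ≠ 0 := two_ne (by omega)
  have n22 : (2:ZMod L₂) ≠ 0 := two_ne (by omega)
  have n23 : (2:ZMod L₃) ≠ 0 := two_ne (by omega)
  constructor
  · intro h
    simp only [F12, Set.mem_insert_iff, Set.mem_singleton_iff, e1, e2, e3, Sym2.eq_iff, Prod.mk.injEq] at h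
    rcases h with (⟨⟨a1, a2, a3⟩, b1, b2, b3⟩ | ⟨⟨a1, a2, a3⟩, b1, b2, b3⟩) | (⟨⟨a1, a2, a3⟩, b1, b2, b3⟩ | ⟨⟨a1, a2, a3⟩, b1, b2, b3⟩) | (⟨⟨a1, a2, a3⟩, b1, b2, b3⟩ | ⟨⟨a1, a2, a3⟩, b1, b2, b3⟩) | ⟨⟨a1, a2, a3⟩, b1, b2, b3⟩ | ⟨⟨a1, a2, a3⟩, b1, b2, b3⟩
    · exact ⟨a1, a3, Or.inl a2⟩
    · exact absurd (by linear_combination b1 - a1) n21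
    · exact absurd (by linear_combination b1 - a1) n11
    · exact absurd (by linear_combination b1 - a1) n11
    · exact ⟨a1, a3, Or.inr a2⟩
    · exact absurd (by linear_combination b1 - a1) n21
    · exact absurd (by linear_combination b1 - a1) n11
    · exact absurd (by linear_combination b1 - a1) n11
  · rintro ⟨rfl, rfl, (rfl | rfl)⟩ <;> simp [F12]

lemma e1_mem_F13 (hL1 : 4 ≤ L₁) (hL2 : 4 ≤ L₂) (hL3 : 4 ≤ L₃)
    {i i' : ZMod L₁} {j j' : ZMod L₂} {k k' : ZMod L₃} :
    e1 i j k ∈ F13 i' j' k' ↔ i = i' ∧ j = j' ∧ (k = k' ∨ k = k' + 1) := by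
  have n11 : (1:ZMod L₁) ≠ 0 := one_ne (by omega)
  have n12 : (1:ZMod L₂) ≠ 0 := one_ne (by omega)
  have n13 : (1:ZMod L₃) ≠ 0 := one_ne (by omega)
  have n21 : (2:ZMod L₁) ≠ 0 := two_ne (by omega)
  have n22 : (2:ZMod L₂) ≠ 0 := two_ne (by omega)
  have n23 : (2:ZMod L₃) ≠ 0 := two_ne (by omega)
  constructor
  · intro h
    simp only [F13, Set.mem_insert_iff, Set.mem_singleton_iff, e1, e2, e3, Sym2.eq_iff, Prod.mk.injEq] at h
    rcases h with (⟨⟨a1, a2, a3⟩, b1, b2, b3⟩ | ⟨⟨a1, a2, a3⟩, b1, b2, b3⟩) | (⟨⟨a1, a2, a3⟩, b1, b2, b3⟩ | ⟨⟨a1, a2, a3⟩, b1, b2, b3⟩) | (⟨⟨a1, a2, a3⟩, b1, b2, b3⟩ | ⟨⟨a1, a2, a3⟩, b1, b2, b3⟩) | ⟨⟨a1, a2, a3⟩, b1, b2, b3⟩ | ⟨⟨a1, a2, a3⟩, b1, b2, b3⟩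
    · exact ⟨a1, a2, Or.inl a3⟩
    · exact absurd (by linear_combination b1 - a1) n21
    · exact absurd (by linear_combination b1 - a1) n11
    · exact absurd (by linear_combination b1 - a1) n11
    · exact ⟨a1, a2, Or.inr a3⟩
    · exact absurd (by linear_combination b1 - a1) n21
    · exact absurd (by linear_combination b1 - a1) n11
    · exact absurd (by linear_combination b1 - a1) n11
  · rintro ⟨rfl, rfl, (rfl | rfl)⟩ <;> simp [F13]

lemma e2_mem_F12 (hL1 : 4 ≤ L₁) (hL2 : 4 ≤ L₂) (hL3 : 4 ≤ L₃)
    {i i' : ZMod L₁} {j j' : ZMod L₂} {k k' : ZMod L₃} :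
    e2 i j k ∈ F12 i' j' k' ↔ j = j' ∧ k = k' ∧ (i = i' ∨ i = i' + 1) := by
  have n11 : (1:ZMod L₁) ≠ 0 := one_ne (by omega)
  have n12 : (1:ZMod L₂) ≠ 0 := one_ne (by omega)
  have n13 : (1:ZMod L₃) ≠ 0 := one_ne (by omega)
  have n21 : (2:ZMod L₁) ≠ 0 := two_ne (by omega)
  have n22 : (2:ZMod L₂) ≠ 0 := two_ne (by omega)
  have n23 : (2:ZMod L₃) ≠ 0 := two_ne (by omega)
  constructor
  · intro h
    simp only [F12, Set.mem_insert_iff, Set.mem_singleton_iff, e1, e2, e3, Sym2.eq_iff, Prod.mk.injEq] at h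
    rcases h with (⟨⟨a1, a2, a3⟩, b1, b2, b3⟩ | ⟨⟨a1, a2, a3⟩, b1, b2, b3⟩) | (⟨⟨a1, a2, a3⟩, b1, b2, b3⟩ | ⟨⟨a1, a2, a3⟩, b1, b2, b3⟩) | (⟨⟨a1, a2, a3⟩, b1, b2, b3⟩ | ⟨⟨a1, a2, a3⟩, b1, b2, b3⟩) | ⟨⟨a1, a2, a3⟩, b1, b2, b3⟩ | ⟨⟨a1, a2, a3⟩, b1, b2, b3⟩
    · exact absurd (by linear_combination b2 - a2) n12
    · exact absurd (by linear_combination b2 - a2) n12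
    · exact ⟨a2, a3, Or.inr a1⟩
    · exact absurd (by linear_combination b2 - a2) n22
    · exact absurd (by linear_combination b2 - a2) n12
    · exact absurd (by linear_combination b2 - a2) n12
    · exact ⟨a2, a3, Or.inl a1⟩
    · exact absurd (by linear_combination b2 - a2) n22
  · rintro ⟨rfl, rfl, (rfl | rfl)⟩ <;> simp [F12]

lemma e2_mem_F23 (hL1 : 4 ≤ L₁) (hL2 : 4 ≤ L₂) (hL3 : 4 ≤ L₃)
    {i i' : ZMod L₁} {j j' : ZMod L₂} {k k' : ZMod L₃} :
    e2 i j k ∈ F23 i' j' k' ↔ i = i' ∧ j = j' ∧ (k = k' ∨ k = k' + 1) := by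
  have n11 : (1:ZMod L₁) ≠ 0 := one_ne (by omega)
  have n12 : (1:ZMod L₂) ≠ 0 := one_ne (by omega)
  have n13 : (1:ZMod L₃) ≠ 0 := one_ne (by omega)
  have n21 : (2:ZMod L₁) ≠ 0 := two_ne (by omega)
  have n22 : (2:ZMod L₂) ≠ 0 := two_ne (by omega)
  have n23 : (2:ZMod L₃) ≠ 0 := two_ne (by omega)
  constructor
  · intro h
    simp only [F23, Set.mem_insert_iff, Set.mem_singleton_iff, e1, e2, e3, Sym2.eq_iff, Prod.mk.injEq] at h
    rcases h with (⟨⟨a1, a2, a3⟩, b1, b2, b3⟩ | ⟨⟨a1, a2, a3⟩, b1, b2, b3⟩) | (⟨⟨a1, a2, a3⟩, b1, b2, b3⟩ | ⟨⟨a1, a2, a3⟩, b1, b2, b3⟩) | (⟨⟨a1, a2, a3⟩, b1, b2, b3⟩ | ⟨⟨a1, a2, a3⟩, b1, b2, b3⟩) | ⟨⟨a1, a2, a3⟩, b1, b2, b3⟩ | ⟨⟨a1, a2, a3⟩, b1, b2, b3⟩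
    · exact ⟨a1, a2, Or.inl a3⟩
    · exact absurd (by linear_combination b2 - a2) n22
    · exact absurd (by linear_combination b2 - a2) n12
    · exact absurd (by linear_combination b2 - a2) n12
    · exact ⟨a1, a2, Or.inr a3⟩
    · exact absurd (by linear_combination b2 - a2) n22
    · exact absurd (by linear_combination b2 - a2) n12
    · exact absurd (by linear_combination b2 - a2) n12
  · rintro ⟨rfl, rfl, (rfl | rfl)⟩ <;> simp [F23]

lemma e3_mem_F13 (hL1 : 4 ≤ L₁) (hL2 : 4 ≤ L₂) (hL3 : 4 ≤ L₃)
    {i i' : ZMod L₁} {j j' : ZMod L₂} {k k' : ZMod L₃} :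
    e3 i j k ∈ F13 i' j' k' ↔ j = j' ∧ k = k' ∧ (i = i' ∨ i = i' + 1) := by
  have n11 : (1:ZMod L₁) ≠ 0 := one_ne (by omega)
  have n12 : (1:ZMod L₂) ≠ 0 := one_ne (by omega)
  have n13 : (1:ZMod L₃) ≠ 0 := one_ne (by omega)
  have n21 : (2:ZMod L₁) ≠ 0 := two_ne (by omega)
  have n22 : (2:ZMod L₂) ≠ 0 := two_ne (by omega)
  have n23 : (2:ZMod L₃) ≠ 0 := two_ne (by omega)
  constructor
  · intro h
    simp only [F13, Set.mem_insert_iff, Set.mem_singleton_iff, e1, e2, e3, Sym2.eq_iff, Prod.mk.injEq] at h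
    rcases h with (⟨⟨a1, a2, a3⟩, b1, b2, b3⟩ | ⟨⟨a1, a2, a3⟩, b1, b2, b3⟩) | (⟨⟨a1, a2, a3⟩, b1, b2, b3⟩ | ⟨⟨a1, a2, a3⟩, b1, b2, b3⟩) | (⟨⟨a1, a2, a3⟩, b1, b2, b3⟩ | ⟨⟨a1, a2, a3⟩, b1, b2, b3⟩) | ⟨⟨a1, a2, a3⟩, b1, b2, b3⟩ | ⟨⟨a1, a2, a3⟩, b1, b2, b3⟩
    · exact absurd (by linear_combination b3 - a3) n13
    · exact absurd (by linear_combination b3 - a3) n13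
    · exact ⟨a2, a3, Or.inr a1⟩
    · exact absurd (by linear_combination b3 - a3) n23
    · exact absurd (by linear_combination b3 - a3) n13
    · exact absurd (by linear_combination b3 - a3) n13
    · exact ⟨a2, a3, Or.inl a1⟩
    · exact absurd (by linear_combination b3 - a3) n23
  · rintro ⟨rfl, rfl, (rfl | rfl)⟩ <;> simp [F13]

lemma e3_mem_F23 (hL1 : 4 ≤ L₁) (hL2 : 4 ≤ L₂) (hL3 : 4 ≤ L₃)
    {i i' : ZMod L₁} {j j' : ZMod L₂} {k k' : ZMod L₃} :
    e3 i j k ∈ F23 i' j' k' ↔ i = i' ∧ k = k' ∧ (j = j' ∨ j = j' + 1) := by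
  have n11 : (1:ZMod L₁) ≠ 0 := one_ne (by omega)
  have n12 : (1:ZMod L₂) ≠ 0 := one_ne (by omega)
  have n13 : (1:ZMod L₃) ≠ 0 := one_ne (by omega)
  have n21 : (2:ZMod L₁) ≠ 0 := two_ne (by omega)
  have n22 : (2:ZMod L₂) ≠ 0 := two_ne (by omega)
  have n23 : (2:ZMod L₃) ≠ 0 := two_ne (by omega)
  constructor
  · intro h
    simp only [F23, Set.mem_insert_iff, Set.mem_singleton_iff, e1, e2, e3, Sym2.eq_iff, Prod.mk.injEq] at h
    rcases h with (⟨⟨a1, a2, a3⟩, b1, b2, b3⟩ | ⟨⟨a1, a2, a3⟩, b1, b2, b3⟩) | (⟨⟨a1, a2, a3⟩, b1, b2, b3⟩ | ⟨⟨a1, a2, a3⟩, b1, b2, b3⟩) | (⟨⟨a1, a2, a3⟩, b1, b2, b3⟩ | ⟨⟨a1, a2, a3⟩, b1, b2, b3⟩) | ⟨⟨a1, a2, a3⟩, b1, b2, b3⟩ | ⟨⟨a1, a2, a3⟩, b1, b2, b3⟩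
    · exact absurd (by linear_combination b3 - a3) n13
    · exact absurd (by linear_combination b3 - a3) n13
    · exact ⟨a1, a3, Or.inr a2⟩
    · exact absurd (by linear_combination b3 - a3) n23
    · exact absurd (by linear_combination b3 - a3) n13
    · exact absurd (by linear_combination b3 - a3) n13
    · exact ⟨a1, a3, Or.inl a2⟩
    · exact absurd (by linear_combination b3 - a3) n23
  · rintro ⟨rfl, rfl, (rfl | rfl)⟩ <;> simp [F23]

lemma e1_mem_F23 (hL1 : 4 ≤ L₁) (hL2 : 4 ≤ L₂) (hL3 : 4 ≤ L₃)
    {i i' : ZMod L₁} {j j' : ZMod L₂} {k k' : ZMod L₃} :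
    e1 i j k ∉ F23 i' j' k' := by
  have n11 : (1:ZMod L₁) ≠ 0 := one_ne (by omega)
  have n12 : (1:ZMod L₂) ≠ 0 := one_ne (by omega)
  have n13 : (1:ZMod L₃) ≠ 0 := one_ne (by omega)
  have n21 : (2:ZMod L₁) ≠ 0 := two_ne (by omega)
  have n22 : (2:ZMod L₂) ≠ 0 := two_ne (by omega)
  have n23 : (2:ZMod L₃) ≠ 0 := two_ne (by omega)
  intro h
  simp only [F23, Set.mem_insert_iff, Set.mem_singleton_iff, e1, e2, e3, Sym2.eq_iff, Prod.mk.injEq] at h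
  rcases h with (⟨⟨a1, a2, a3⟩, b1, b2, b3⟩ | ⟨⟨a1, a2, a3⟩, b1, b2, b3⟩) | (⟨⟨a1, a2, a3⟩, b1, b2, b3⟩ | ⟨⟨a1, a2, a3⟩, b1, b2, b3⟩) | (⟨⟨a1, a2, a3⟩, b1, b2, b3⟩ | ⟨⟨a1, a2, a3⟩, b1, b2, b3⟩) | ⟨⟨a1, a2, a3⟩, b1, b2, b3⟩ | ⟨⟨a1, a2, a3⟩, b1, b2, b3⟩
  · exact absurd (by linear_combination b1 - a1) n11
  · exact absurd (by linear_combination b1 - a1) n11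
  · exact absurd (by linear_combination b1 - a1) n11
  · exact absurd (by linear_combination b1 - a1) n11
  · exact absurd (by linear_combination b1 - a1) n11
  · exact absurd (by linear_combination b1 - a1) n11
  · exact absurd (by linear_combination b1 - a1) n11
  · exact absurd (by linear_combination b1 - a1) n11

lemma e2_mem_F13 (hL1 : 4 ≤ L₁) (hL2 : 4 ≤ L₂) (hL3 : 4 ≤ L₃)
    {i i' : ZMod L₁} {j j' : ZMod L₂} {k k' : ZMod L₃} :
    e2 i j k ∉ F13 i' j' k' := by
  have n11 : (1:ZMod L₁) ≠ 0 := one_ne (by omega)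
  have n12 : (1:ZMod L₂) ≠ 0 := one_ne (by omega)
  have n13 : (1:ZMod L₃) ≠ 0 := one_ne (by omega)
  have n21 : (2:ZMod L₁) ≠ 0 := two_ne (by omega)
  have n22 : (2:ZMod L₂) ≠ 0 := two_ne (by omega)
  have n23 : (2:ZMod L₃) ≠ 0 := two_ne (by omega)
  intro h
  simp only [F13, Set.mem_insert_iff, Set.mem_singleton_iff, e1, e2, e3, Sym2.eq_iff, Prod.mk.injEq] at h
  rcases h with (⟨⟨a1, a2, a3⟩, b1, b2, b3⟩ | ⟨⟨a1, a2, a3⟩, b1, b2, b3⟩) | (⟨⟨a1, a2, a3⟩, b1, b2, b3⟩ | ⟨⟨a1, a2, a3⟩, b1, b2, b3⟩) | (⟨⟨a1, a2, a3⟩, b1, b2, b3⟩ | ⟨⟨a1, a2, a3⟩, b1, b2, b3⟩) | ⟨⟨a1, a2, a3⟩, b1, b2, b3⟩ | ⟨⟨a1, a2, a3⟩, b1, b2, b3⟩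
  · exact absurd (by linear_combination b2 - a2) n12
  · exact absurd (by linear_combination b2 - a2) n12
  · exact absurd (by linear_combination b2 - a2) n12
  · exact absurd (by linear_combination b2 - a2) n12
  · exact absurd (by linear_combination b2 - a2) n12
  · exact absurd (by linear_combination b2 - a2) n12
  · exact absurd (by linear_combination b2 - a2) n12
  · exact absurd (by linear_combination b2 - a2) n12

lemma e3_mem_F12 (hL1 : 4 ≤ L₁) (hL2 : 4 ≤ L₂) (hL3 : 4 ≤ L₃)
    {i i' : ZMod L₁} {j j' : ZMod L₂} {k k' : ZMod L₃} :
    e3 i j k ∉ F12 i' j' k' := by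
  have n11 : (1:ZMod L₁) ≠ 0 := one_ne (by omega)
  have n12 : (1:ZMod L₂) ≠ 0 := one_ne (by omega)
  have n13 : (1:ZMod L₃) ≠ 0 := one_ne (by omega)
  have n21 : (2:ZMod L₁) ≠ 0 := two_ne (by omega)
  have n22 : (2:ZMod L₂) ≠ 0 := two_ne (by omega)
  have n23 : (2:ZMod L₃) ≠ 0 := two_ne (by omega)
  intro h
  simp only [F12, Set.mem_insert_iff, Set.mem_singleton_iff, e1, e2, e3, Sym2.eq_iff, Prod.mk.injEq] at h
  rcases h with (⟨⟨a1, a2, a3⟩, b1, b2, b3⟩ | ⟨⟨a1, a2, a3⟩, b1, b2, b3⟩) | (⟨⟨a1, a2, a3⟩, b1, b2, b3⟩ | ⟨⟨a1, a2, a3⟩, b1, b2, b3⟩) | (⟨⟨a1, a2, a3⟩, b1, b2, b3⟩ | ⟨⟨a1, a2, a3⟩, b1, b2, b3⟩) | ⟨⟨a1, a2, a3⟩, b1, b2, b3⟩ | ⟨⟨a1, a2, a3⟩, b1, b2, b3⟩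
  · exact absurd (by linear_combination b3 - a3) n13
  · exact absurd (by linear_combination b3 - a3) n13
  · exact absurd (by linear_combination b3 - a3) n13
  · exact absurd (by linear_combination b3 - a3) n13
  · exact absurd (by linear_combination b3 - a3) n13
  · exact absurd (by linear_combination b3 - a3) n13
  · exact absurd (by linear_combination b3 - a3) n13
  · exact absurd (by linear_combination b3 - a3) n13

section par
variable {L : ℕ}

def parB (x : ZMod L) : Bool := decide (Even x.val)

lemma parB_add_one (hE : Even L) (hL : 2 ≤ L) (x : ZMod L) : parB (x + 1) = !parB x := by
  haveI : NeZero L := ⟨by omega⟩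
  haveI : Fact (1 < L) := ⟨by omega⟩
  have hv : (x + 1).val = (x.val + 1) % L := by
    rw [ZMod.val_add, ZMod.val_one]
  have hx : x.val < L := ZMod.val_lt x
  obtain ⟨m, rfl⟩ := hE
  rcases Nat.lt_or_ge (x.val + 1) (m + m) with h | h
  · rw [Nat.mod_eq_of_lt h] at hv
    simp only [parB, hv, Nat.even_add_one, decide_not]
  · have hxe : x.val + 1 = m + m := by omega
    rw [hxe, Nat.mod_self] at hv
    have : ¬ Even x.val := by rw [Nat.even_iff] ; omega
    simp [parB, hv, this]

lemma parB_sub_one (hE : Even L) (hL : 2 ≤ L) (x : ZMod L) : parB (x - 1) = !parB x := by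
  have := parB_add_one hE hL (x - 1)
  rw [sub_add_cancel] at this
  rcases Bool.eq_false_or_eq_true (parB (x-1)) with h | h <;> simp [h] at this ⊢ <;> simp [this]

lemma parB_zero (hL : 2 ≤ L) : parB (0 : ZMod L) = true := by
  haveI : NeZero L := ⟨by omega⟩
  simp [parB]

lemma parB_one (hL : 2 ≤ L) : parB (1 : ZMod L) = false := by
  haveI : Fact (1 < L) := ⟨by omega⟩
  simp [parB, ZMod.val_one]

end par

section faces
variable {L₁ L₂ L₃ : ℕ}

lemma F12_cyc (hL1 : 4 ≤ L₁) (hL2 : 4 ≤ L₂) (i : ZMod L₁) (j : ZMod L₂) (k : ZMod L₃) :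
    IsFourCycleEdgeSet (Q3 L₁ L₂ L₃) (F12 i j k) := by
  have n1 := ne_add_one (L := L₁) (by omega)
  have n2 := ne_add_one (L := L₂) (by omega)
  apply isFourCycle_quad (u := (i,j,k)) (v := (i+1,j,k)) (w := (i+1,j+1,k)) (x := (i,j+1,k))
  · exact adj1 (by omega) i j k
  · exact adj2 (by omega) (i+1) j k
  · exact ((adj1 (by omega) i (j+1) k)).symm
  · exact ((adj2 (by omega) i j k)).symm
  · intro h; simp [Prod.ext_iff] at h; exact one_ne (by omega) h.1
  · intro h; simp [Prod.ext_iff] at h; exact one_ne (by omega) h.1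

lemma F13_cyc (hL1 : 4 ≤ L₁) (hL3 : 4 ≤ L₃) (i : ZMod L₁) (j : ZMod L₂) (k : ZMod L₃) :
    IsFourCycleEdgeSet (Q3 L₁ L₂ L₃) (F13 i j k) := by
  have n1 := ne_add_one (L := L₁) (by omega)
  have n3 := ne_add_one (L := L₃) (by omega)
  apply isFourCycle_quad (u := (i,j,k)) (v := (i+1,j,k)) (w := (i+1,j,k+1)) (x := (i,j,k+1))
  · exact adj1 (by omega) i j k
  · exact adj3 (by omega) (i+1) j k
  · exact ((adj1 (by omega) i j (k+1))).symm
  · exact ((adj3 (by omega) i j k)).symm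
  · intro h; simp [Prod.ext_iff] at h; exact one_ne (by omega) h.1
  · intro h; simp [Prod.ext_iff] at h; exact one_ne (by omega) h.1

lemma F23_cyc (hL2 : 4 ≤ L₂) (hL3 : 4 ≤ L₃) (i : ZMod L₁) (j : ZMod L₂) (k : ZMod L₃) :
    IsFourCycleEdgeSet (Q3 L₁ L₂ L₃) (F23 i j k) := by
  have n2 := ne_add_one (L := L₂) (by omega)
  have n3 := ne_add_one (L := L₃) (by omega)
  apply isFourCycle_quad (u := (i,j,k)) (v := (i,j+1,k)) (w := (i,j+1,k+1)) (x := (i,j,k+1))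
  · exact adj2 (by omega) i j k
  · exact adj3 (by omega) i (j+1) k
  · exact ((adj2 (by omega) i j (k+1))).symm
  · exact ((adj3 (by omega) i j k)).symm
  · intro h; simp [Prod.ext_iff] at h; exact one_ne (by omega) h.1
  · intro h; simp [Prod.ext_iff] at h; exact one_ne (by omega) h.1

lemma F12_sub (hL1 : 4 ≤ L₁) (hL2 : 4 ≤ L₂) (i : ZMod L₁) (j : ZMod L₂) (k : ZMod L₃) :
    F12 i j k ⊆ (Q3 L₁ L₂ L₃).edgeSet := by
  intro e he
  rcases he with rfl | rfl | rfl | rfl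
  · exact (adj1 (by omega) i j k)
  · exact (adj2 (by omega) (i+1) j k)
  · exact (adj1 (by omega) i (j+1) k)
  · exact (adj2 (by omega) i j k)

lemma F13_sub (hL1 : 4 ≤ L₁) (hL3 : 4 ≤ L₃) (i : ZMod L₁) (j : ZMod L₂) (k : ZMod L₃) :
    F13 i j k ⊆ (Q3 L₁ L₂ L₃).edgeSet := by
  intro e he
  rcases he with rfl | rfl | rfl | rfl
  · exact (adj1 (by omega) i j k)
  · exact (adj3 (by omega) (i+1) j k)
  · exact (adj1 (by omega) i j (k+1))
  · exact (adj3 (by omega) i j k)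

lemma F23_sub (hL2 : 4 ≤ L₂) (hL3 : 4 ≤ L₃) (i : ZMod L₁) (j : ZMod L₂) (k : ZMod L₃) :
    F23 i j k ⊆ (Q3 L₁ L₂ L₃).edgeSet := by
  intro e he
  rcases he with rfl | rfl | rfl | rfl
  · exact (adj2 (by omega) i j k)
  · exact (adj3 (by omega) i (j+1) k)
  · exact (adj2 (by omega) i j (k+1))
  · exact (adj3 (by omega) i j k)

lemma cyc_adj_cases {L : ℕ} (x y : ZMod L) (h : (cycleG L).Adj x y) : y = x + 1 ∨ x = y + 1 := by
  rw [cycleG, SimpleGraph.fromRel_adj] at h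
  rcases h.2 with hc | hc
  · right; linear_combination hc
  · left; linear_combination hc

lemma edge_classify {e : Sym2 (QV L₁ L₂ L₃)} (he : e ∈ (Q3 L₁ L₂ L₃).edgeSet) :
    (∃ i j k, e = e1 i j k) ∨ (∃ i j k, e = e2 i j k) ∨ (∃ i j k, e = e3 i j k) := by
  induction e using Sym2.inductionOn with
  | hf u v =>
    rw [SimpleGraph.mem_edgeSet] at he
    obtain ⟨i, j, k⟩ := u
    obtain ⟨i', j', k'⟩ := v
    rw [Q3, SimpleGraph.boxProd_adj] at he
    dsimp only at he
    rcases he with ⟨ha, hb⟩ | ⟨hb, ha⟩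
    · injection hb with h1 h2
      subst h1; subst h2
      rcases cyc_adj_cases _ _ ha with hc | hc
      · exact Or.inl ⟨i, j, k, by rw [hc]; rfl⟩
      · exact Or.inl ⟨i', j, k, by rw [hc]; exact Sym2.eq_swap⟩
    · subst ha
      rw [SimpleGraph.boxProd_adj] at hb
      dsimp only at hb
      rcases hb with ⟨ha, hb⟩ | ⟨hb, ha⟩
      · subst hb
        rcases cyc_adj_cases _ _ ha with hc | hc
        · exact Or.inr (Or.inl ⟨i, j, k, by rw [hc]; rfl⟩)
        · exact Or.inr (Or.inl ⟨i, j', k, by rw [hc]; exact Sym2.eq_swap⟩)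
      · subst ha
        rcases cyc_adj_cases _ _ hb with hc | hc
        · exact Or.inr (Or.inr ⟨i, j, k, by rw [hc]; rfl⟩)
        · exact Or.inr (Or.inr ⟨i, j, k', by rw [hc]; exact Sym2.eq_swap⟩)
end faces
section pick
variable {L : ℕ}

lemma pick_par (hE : Even L) (hL : 2 ≤ L) (x : ZMod L) (b : Bool) :
    ∃ x₀, parB x₀ = b ∧ (x = x₀ ∨ x = x₀ + 1) ∧
      ∀ y, parB y = b → (x = y ∨ x = y + 1) → y = x₀ := by
  by_cases h : parB x = b
  · refine ⟨x, h, Or.inl rfl, ?_⟩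
    intro y hy hxy
    rcases hxy with rfl | rfl
    · rfl
    · rw [parB_add_one hE hL, hy] at h
      cases b <;> simp_all
  · refine ⟨x - 1, ?_, Or.inr (by ring), ?_⟩
    · rw [parB_sub_one hE hL]
      cases b <;> cases hx : parB x <;> simp_all
    · intro y hy hxy
      rcases hxy with rfl | h2
      · exact absurd hy h
      · rw [h2]; ring
end pick

section dset
variable {L₁ L₂ L₃ : ℕ}

def Dset (ε : ZMod L₂ × ZMod L₃ → Bool) : Set (Set (Sym2 (QV L₁ L₂ L₃))) :=
  {S | (∃ i j k, parB j = false ∧ parB k = false ∧ S = F23 i j k) ∨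
       (∃ i j k, parB j = true ∧ parB k = true ∧ parB i = ε (j,k) ∧
          (S = F12 i j k ∨ S = F12 i j (k+1))) ∨
       (∃ i j k, parB j = true ∧ parB k = true ∧ parB i = !ε (j,k) ∧
          (S = F13 i j k ∨ S = F13 i (j+1) k))}

lemma cover1 (hL1 : 4 ≤ L₁) (hL2 : 4 ≤ L₂) (hL3 : 4 ≤ L₃)
    (hE1 : Even L₁) (hE2 : Even L₂) (hE3 : Even L₃) (ε : ZMod L₂ × ZMod L₃ → Bool) (i : ZMod L₁) (j : ZMod L₂) (k : ZMod L₃) :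
    ∃! S, S ∈ Dset ε ∧ e1 i j k ∈ S := by
  obtain ⟨j₀, hj₀, hjor, hjun⟩ := pick_par hE2 (by omega) j true
  obtain ⟨k₀, hk₀, hkor, hkun⟩ := pick_par hE3 (by omega) k true
  by_cases hc : parB i = ε (j₀, k₀)
  · refine ⟨F12 i j₀ k, ⟨?_, (e1_mem_F12 hL1 hL2 hL3).mpr ⟨rfl, rfl, hjor⟩⟩, ?_⟩
    · right; left
      rcases hkor with hk | hk
      · exact ⟨i, j₀, k₀, hj₀, hk₀, hc, Or.inl (by rw [hk])⟩
      · exact ⟨i, j₀, k₀, hj₀, hk₀, hc, Or.inr (by rw [hk])⟩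
    · rintro S ⟨hS, heS⟩
      rcases hS with ⟨i', j', k', hpj, hpk, rfl⟩ |
        ⟨i', j', k', hpj, hpk, hpc, (rfl | rfl)⟩ |
        ⟨i', j', k', hpj, hpk, hpc, (rfl | rfl)⟩
      · exact absurd heS (e1_mem_F23 hL1 hL2 hL3)
      · obtain ⟨rfl, rfl, hj⟩ := (e1_mem_F12 hL1 hL2 hL3).mp heS
        rw [hjun j' hpj hj]
      · obtain ⟨rfl, hk, hj⟩ := (e1_mem_F12 hL1 hL2 hL3).mp heS
        rw [hjun j' hpj hj, ← hk]
      · obtain ⟨rfl, hj, hkk⟩ := (e1_mem_F13 hL1 hL2 hL3).mp heS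
        rw [hjun j' hpj (Or.inl hj), hkun k' hpk hkk] at hpc
        rw [hc] at hpc
        simp at hpc
      · obtain ⟨rfl, hj, hkk⟩ := (e1_mem_F13 hL1 hL2 hL3).mp heS
        rw [hjun j' hpj (Or.inr hj), hkun k' hpk hkk] at hpc
        rw [hc] at hpc
        simp at hpc
  · have hnc : parB i = !ε (j₀, k₀) := by
      cases hv : ε (j₀, k₀) <;> cases hpi : parB i <;> simp_all
    refine ⟨F13 i j k₀, ⟨?_, (e1_mem_F13 hL1 hL2 hL3).mpr ⟨rfl, rfl, hkor⟩⟩, ?_⟩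
    · right; right
      rcases hjor with hj | hj
      · exact ⟨i, j₀, k₀, hj₀, hk₀, hnc, Or.inl (by rw [hj])⟩
      · exact ⟨i, j₀, k₀, hj₀, hk₀, hnc, Or.inr (by rw [hj])⟩
    · rintro S ⟨hS, heS⟩
      rcases hS with ⟨i', j', k', hpj, hpk, rfl⟩ |
        ⟨i', j', k', hpj, hpk, hpc, (rfl | rfl)⟩ |
        ⟨i', j', k', hpj, hpk, hpc, (rfl | rfl)⟩
      · exact absurd heS (e1_mem_F23 hL1 hL2 hL3)
      · obtain ⟨rfl, rfl, hj⟩ := (e1_mem_F12 hL1 hL2 hL3).mp heS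
        rw [hjun j' hpj hj, hkun k hpk (Or.inl rfl)] at hpc
        exact absurd hpc hc
      · obtain ⟨rfl, hk, hj⟩ := (e1_mem_F12 hL1 hL2 hL3).mp heS
        rw [hjun j' hpj hj, hkun k' hpk (Or.inr hk)] at hpc
        exact absurd hpc hc
      · obtain ⟨rfl, hj, hkk⟩ := (e1_mem_F13 hL1 hL2 hL3).mp heS
        rw [hj, hkun k' hpk hkk]
      · obtain ⟨rfl, hj, hkk⟩ := (e1_mem_F13 hL1 hL2 hL3).mp heS
        rw [hj, hkun k' hpk hkk]
lemma cover2 (hL1 : 4 ≤ L₁) (hL2 : 4 ≤ L₂) (hL3 : 4 ≤ L₃)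
    (hE1 : Even L₁) (hE2 : Even L₂) (hE3 : Even L₃) (ε : ZMod L₂ × ZMod L₃ → Bool)
    (i : ZMod L₁) (j : ZMod L₂) (k : ZMod L₃) :
    ∃! S, S ∈ Dset ε ∧ e2 i j k ∈ S := by
  by_cases hpj : parB j = true
  · obtain ⟨k₀, hk₀, hkor, hkun⟩ := pick_par hE3 (by omega) k true
    obtain ⟨i₀, hi₀, hior, hiun⟩ := pick_par hE1 (by omega) i (ε (j, k₀))
    refine ⟨F12 i₀ j k, ⟨?_, (e2_mem_F12 hL1 hL2 hL3).mpr ⟨rfl, rfl, hior⟩⟩, ?_⟩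
    · right; left
      rcases hkor with hk | hk
      · exact ⟨i₀, j, k₀, hpj, hk₀, hi₀, Or.inl (by rw [hk])⟩
      · exact ⟨i₀, j, k₀, hpj, hk₀, hi₀, Or.inr (by rw [hk])⟩
    · rintro S ⟨hS, heS⟩
      rcases hS with ⟨i', j', k', hqj, hqk, rfl⟩ |
        ⟨i', j', k', hqj, hqk, hqc, (rfl | rfl)⟩ |
        ⟨i', j', k', hqj, hqk, hqc, (rfl | rfl)⟩
      · obtain ⟨rfl, rfl, hkk⟩ := (e2_mem_F23 hL1 hL2 hL3).mp heS
        rw [hpj] at hqj; exact absurd hqj (by simp)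
      · obtain ⟨rfl, rfl, hii⟩ := (e2_mem_F12 hL1 hL2 hL3).mp heS
        rw [hkun k hqk (Or.inl rfl)] at hqc
        rw [hiun i' hqc hii]
      · obtain ⟨rfl, hk, hii⟩ := (e2_mem_F12 hL1 hL2 hL3).mp heS
        rw [hkun k' hqk (Or.inr hk)] at hqc
        rw [hiun i' hqc hii, ← hk]
      · exact absurd heS (e2_mem_F13 hL1 hL2 hL3)
      · exact absurd heS (e2_mem_F13 hL1 hL2 hL3)
  · have hpj' : parB j = false := by simp_all
    obtain ⟨k₁, hk₁, hkor, hkun⟩ := pick_par hE3 (by omega) k false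
    refine ⟨F23 i j k₁, ⟨?_, (e2_mem_F23 hL1 hL2 hL3).mpr ⟨rfl, rfl, hkor⟩⟩, ?_⟩
    · exact Or.inl ⟨i, j, k₁, hpj', hk₁, rfl⟩
    · rintro S ⟨hS, heS⟩
      rcases hS with ⟨i', j', k', hqj, hqk, rfl⟩ |
        ⟨i', j', k', hqj, hqk, hqc, (rfl | rfl)⟩ |
        ⟨i', j', k', hqj, hqk, hqc, (rfl | rfl)⟩
      · obtain ⟨rfl, rfl, hkk⟩ := (e2_mem_F23 hL1 hL2 hL3).mp heS
        rw [hkun k' hqk hkk]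
      · obtain ⟨rfl, rfl, hii⟩ := (e2_mem_F12 hL1 hL2 hL3).mp heS
        exact absurd hqj hpj
      · obtain ⟨rfl, hk, hii⟩ := (e2_mem_F12 hL1 hL2 hL3).mp heS
        exact absurd hqj hpj
      · exact absurd heS (e2_mem_F13 hL1 hL2 hL3)
      · exact absurd heS (e2_mem_F13 hL1 hL2 hL3)

lemma cover3 (hL1 : 4 ≤ L₁) (hL2 : 4 ≤ L₂) (hL3 : 4 ≤ L₃)
    (hE1 : Even L₁) (hE2 : Even L₂) (hE3 : Even L₃) (ε : ZMod L₂ × ZMod L₃ → Bool)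
    (i : ZMod L₁) (j : ZMod L₂) (k : ZMod L₃) :
    ∃! S, S ∈ Dset ε ∧ e3 i j k ∈ S := by
  by_cases hpk : parB k = true
  · obtain ⟨j₀, hj₀, hjor, hjun⟩ := pick_par hE2 (by omega) j true
    obtain ⟨i₀, hi₀, hior, hiun⟩ := pick_par hE1 (by omega) i (!ε (j₀, k))
    refine ⟨F13 i₀ j k, ⟨?_, (e3_mem_F13 hL1 hL2 hL3).mpr ⟨rfl, rfl, hior⟩⟩, ?_⟩
    · right; right
      rcases hjor with hj | hj
      · exact ⟨i₀, j₀, k, hj₀, hpk, hi₀, Or.inl (by rw [hj])⟩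
      · exact ⟨i₀, j₀, k, hj₀, hpk, hi₀, Or.inr (by rw [hj])⟩
    · rintro S ⟨hS, heS⟩
      rcases hS with ⟨i', j', k', hqj, hqk, rfl⟩ |
        ⟨i', j', k', hqj, hqk, hqc, (rfl | rfl)⟩ |
        ⟨i', j', k', hqj, hqk, hqc, (rfl | rfl)⟩
      · obtain ⟨rfl, rfl, hjj⟩ := (e3_mem_F23 hL1 hL2 hL3).mp heS
        rw [hpk] at hqk; exact absurd hqk (by simp)
      · exact absurd heS (e3_mem_F12 hL1 hL2 hL3)
      · exact absurd heS (e3_mem_F12 hL1 hL2 hL3)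
      · obtain ⟨rfl, rfl, hii⟩ := (e3_mem_F13 hL1 hL2 hL3).mp heS
        rw [hjun j hqj (Or.inl rfl)] at hqc
        rw [hiun i' hqc hii]
      · obtain ⟨hj, rfl, hii⟩ := (e3_mem_F13 hL1 hL2 hL3).mp heS
        rw [hjun j' hqj (Or.inr hj)] at hqc
        rw [hiun i' hqc hii, ← hj]
  · have hpk' : parB k = false := by simp_all
    obtain ⟨j₁, hj₁, hjor, hjun⟩ := pick_par hE2 (by omega) j false
    refine ⟨F23 i j₁ k, ⟨?_, (e3_mem_F23 hL1 hL2 hL3).mpr ⟨rfl, rfl, hjor⟩⟩, ?_⟩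
    · exact Or.inl ⟨i, j₁, k, hj₁, hpk', rfl⟩
    · rintro S ⟨hS, heS⟩
      rcases hS with ⟨i', j', k', hqj, hqk, rfl⟩ |
        ⟨i', j', k', hqj, hqk, hqc, (rfl | rfl)⟩ |
        ⟨i', j', k', hqj, hqk, hqc, (rfl | rfl)⟩
      · obtain ⟨rfl, rfl, hjj⟩ := (e3_mem_F23 hL1 hL2 hL3).mp heS
        rw [hjun j' hqj hjj]
      · exact absurd heS (e3_mem_F12 hL1 hL2 hL3)
      · exact absurd heS (e3_mem_F12 hL1 hL2 hL3)
      · obtain ⟨rfl, rfl, hii⟩ := (e3_mem_F13 hL1 hL2 hL3).mp heS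
        exact absurd hqk hpk
      · obtain ⟨hj, rfl, hii⟩ := (e3_mem_F13 hL1 hL2 hL3).mp heS
        exact absurd hqk hpk

lemma Dset_decomp (hL1 : 4 ≤ L₁) (hL2 : 4 ≤ L₂) (hL3 : 4 ≤ L₃)
    (hE1 : Even L₁) (hE2 : Even L₂) (hE3 : Even L₃) (ε : ZMod L₂ × ZMod L₃ → Bool) :
    IsFourCycleDecomp (Q3 L₁ L₂ L₃) (Dset ε) := by
  have hsub : ∀ S ∈ Dset ε, S ⊆ (Q3 L₁ L₂ L₃).edgeSet := by
    rintro S (⟨i,j,k,_,_,rfl⟩ | ⟨i,j,k,_,_,_,(rfl|rfl)⟩ | ⟨i,j,k,_,_,_,(rfl|rfl)⟩)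
    · exact F23_sub hL2 hL3 i j k
    · exact F12_sub hL1 hL2 i j k
    · exact F12_sub hL1 hL2 i j (k+1)
    · exact F13_sub hL1 hL3 i j k
    · exact F13_sub hL1 hL3 i (j+1) k
  have huniq : ∀ e ∈ (Q3 L₁ L₂ L₃).edgeSet, ∃! S, S ∈ Dset ε ∧ e ∈ S := by
    intro e he
    rcases edge_classify he with ⟨i,j,k,rfl⟩ | ⟨i,j,k,rfl⟩ | ⟨i,j,k,rfl⟩
    · exact cover1 hL1 hL2 hL3 hE1 hE2 hE3 ε i j k
    · exact cover2 hL1 hL2 hL3 hE1 hE2 hE3 ε i j k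
    · exact cover3 hL1 hL2 hL3 hE1 hE2 hE3 ε i j k
  refine ⟨?_, ?_, ?_⟩
  · rintro S (⟨i,j,k,_,_,rfl⟩ | ⟨i,j,k,_,_,_,(rfl|rfl)⟩ | ⟨i,j,k,_,_,_,(rfl|rfl)⟩)
    · exact F23_cyc hL2 hL3 i j k
    · exact F12_cyc hL1 hL2 i j k
    · exact F12_cyc hL1 hL2 i j (k+1)
    · exact F13_cyc hL1 hL3 i j k
    · exact F13_cyc hL1 hL3 i (j+1) k
  · intro S hS T hT hne
    rw [Set.disjoint_left]
    intro e heS heT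
    obtain ⟨U, _, hun⟩ := huniq e (hsub S hS heS)
    exact hne ((hun S ⟨hS, heS⟩).trans (hun T ⟨hT, heT⟩).symm)
  · ext e
    constructor
    · rintro ⟨S, hS, heS⟩
      exact hsub S hS heS
    · intro he
      obtain ⟨S, ⟨hS, heS⟩, _⟩ := huniq e he
      exact ⟨S, hS, heS⟩

lemma F12_mem_Dset_iff (hL1 : 4 ≤ L₁) (hL2 : 4 ≤ L₂) (hL3 : 4 ≤ L₃)
    (hE1 : Even L₁) (hE2 : Even L₂) (hE3 : Even L₃) (ε : ZMod L₂ × ZMod L₃ → Bool)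
    {z : ZMod L₁} {j : ZMod L₂} {k : ZMod L₃} (hj : parB j = true) (hk : parB k = true) :
    F12 z j k ∈ Dset ε ↔ parB z = ε (j, k) := by
  constructor
  · rintro (⟨i',j',k',hqj,hqk,hf⟩ | ⟨i',j',k',hqj,hqk,hqc,(hf|hf)⟩ | ⟨i',j',k',hqj,hqk,hqc,(hf|hf)⟩)
    · have h1 : e1 z j k ∈ F23 i' j' k' :=
        hf ▸ (e1_mem_F12 hL1 hL2 hL3).mpr ⟨rfl, rfl, Or.inl rfl⟩
      exact absurd h1 (e1_mem_F23 hL1 hL2 hL3)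
    · have h1 : e1 z j k ∈ F12 i' j' k' :=
        hf ▸ (e1_mem_F12 hL1 hL2 hL3).mpr ⟨rfl, rfl, Or.inl rfl⟩
      obtain ⟨rfl, rfl, _⟩ := (e1_mem_F12 hL1 hL2 hL3).mp h1
      have h2 : e2 z j k ∈ F12 z j' k :=
        hf ▸ (e2_mem_F12 hL1 hL2 hL3).mpr ⟨rfl, rfl, Or.inl rfl⟩
      obtain ⟨rfl, _, _⟩ := (e2_mem_F12 hL1 hL2 hL3).mp h2
      exact hqc
    · have h1 : e1 z j k ∈ F12 i' j' (k'+1) :=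
        hf ▸ (e1_mem_F12 hL1 hL2 hL3).mpr ⟨rfl, rfl, Or.inl rfl⟩
      obtain ⟨rfl, hkk, _⟩ := (e1_mem_F12 hL1 hL2 hL3).mp h1
      rw [hkk, parB_add_one hE3 (by omega), hqk] at hk
      simp at hk
    · have h2 : e2 z j k ∈ F13 i' j' k' :=
        hf ▸ (e2_mem_F12 hL1 hL2 hL3).mpr ⟨rfl, rfl, Or.inl rfl⟩
      exact absurd h2 (e2_mem_F13 hL1 hL2 hL3)
    · have h2 : e2 z j k ∈ F13 i' (j'+1) k' :=
        hf ▸ (e2_mem_F12 hL1 hL2 hL3).mpr ⟨rfl, rfl, Or.inl rfl⟩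
      exact absurd h2 (e2_mem_F13 hL1 hL2 hL3)
  · intro h
    exact Or.inr (Or.inl ⟨z, j, k, hj, hk, h, Or.inl rfl⟩)

lemma card_even {L : ℕ} (hE : Even L) (hL : 2 ≤ L) :
    Nat.card {x : ZMod L // parB x = true} = L / 2 := by
  haveI : NeZero L := ⟨by omega⟩
  obtain ⟨m, rfl⟩ := hE
  have e : {x : ZMod (m + m) // parB x = true} ≃ Fin m :=
    { toFun := fun x => ⟨x.1.val / 2, by
        have h1 : x.1.val < m + m := ZMod.val_lt x.1
        have h2 : Even x.1.val := by simpa [parB] using x.2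
        rw [Nat.even_iff] at h2; omega⟩
      invFun := fun a => ⟨((2 * (a : ℕ) : ℕ) : ZMod (m + m)), by
        have hv : ((2 * (a : ℕ) : ℕ) : ZMod (m + m)).val = 2 * (a : ℕ) :=
          ZMod.val_cast_of_lt (by omega)
        simp only [parB, hv, decide_eq_true_eq]
        exact even_two_mul _⟩
      left_inv := fun x => by
        have h2 : Even x.1.val := by simpa [parB] using x.2
        obtain ⟨t, ht⟩ := h2
        apply Subtype.ext
        dsimp only
        rw [show 2 * (x.1.val / 2) = x.1.val by omega]
        exact ZMod.natCast_rightInverse x.1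
      right_inv := fun a => by
        apply Fin.ext
        dsimp only
        rw [ZMod.val_cast_of_lt (by omega)]
        omega }
  rw [Nat.card_congr e, Nat.card_eq_fintype_card, Fintype.card_fin]
  omega

theorem q3_decomp_count_lower' (L₁ L₂ L₃ : ℕ)
    (he₁ : Even L₁) (he₂ : Even L₂) (he₃ : Even L₃)
    (h₁ : 4 ≤ L₁) (h₁₂ : L₁ ≤ L₂) (h₂₃ : L₂ ≤ L₃) :
    2 ^ (L₂ * L₃ / 4) ≤
      {D : Set (Set (Sym2 (QV L₁ L₂ L₃))) | IsFourCycleDecomp (Q3 L₁ L₂ L₃) D}.ncard := by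
  have hL2 : 4 ≤ L₂ := le_trans h₁ h₁₂
  have hL3 : 4 ≤ L₃ := le_trans hL2 h₂₃
  haveI : NeZero L₁ := ⟨by omega⟩
  haveI : NeZero L₂ := ⟨by omega⟩
  haveI : NeZero L₃ := ⟨by omega⟩
  set SS := {D : Set (Set (Sym2 (QV L₁ L₂ L₃))) | IsFourCycleDecomp (Q3 L₁ L₂ L₃) D} with hSS
  let I := {p : ZMod L₂ × ZMod L₃ // parB p.1 = true ∧ parB p.2 = true}
  let extF : (I → Bool) → (ZMod L₂ × ZMod L₃ → Bool) := fun f p =>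
    if h : parB p.1 = true ∧ parB p.2 = true then f ⟨p, h⟩ else false
  let Φ : (I → Bool) → ↥SS := fun f =>
    ⟨Dset (extF f), Dset_decomp h₁ hL2 hL3 he₁ he₂ he₃ (extF f)⟩
  have hΦ : Function.Injective Φ := by
    intro f g hfg
    have hDD : Dset (L₁ := L₁) (extF f) = Dset (extF g) := congrArg Subtype.val hfg
    funext q
    obtain ⟨⟨j, k⟩, hj, hk⟩ := q
    set z : ZMod L₁ := if extF f (j, k) = true then 0 else 1 with hz
    have hpz : parB z = extF f (j, k) := by
      rcases Bool.eq_false_or_eq_true (extF f (j, k)) with h | h <;>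
        simp [hz, h, parB_zero (L := L₁) (by omega), parB_one (L := L₁) (by omega)]
    have h1 : F12 z j k ∈ Dset (L₁ := L₁) (extF f) :=
      (F12_mem_Dset_iff h₁ hL2 hL3 he₁ he₂ he₃ (extF f) hj hk).mpr hpz
    rw [hDD] at h1
    have h2 := (F12_mem_Dset_iff h₁ hL2 hL3 he₁ he₂ he₃ (extF g) hj hk).mp h1
    rw [hpz] at h2
    have : extF f (j, k) = f ⟨(j, k), hj, hk⟩ := by simp [extF, hj, hk]
    have hg : extF g (j, k) = g ⟨(j, k), hj, hk⟩ := by simp [extF, hj, hk]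
    rw [this, hg] at h2
    exact h2
  have hcard : Nat.card (I → Bool) ≤ Nat.card ↥SS := Nat.card_le_card_of_injective Φ hΦ
  have hI : Nat.card I = (L₂ / 2) * (L₃ / 2) := by
    rw [Nat.card_congr (Equiv.subtypeProdEquivProd
      (p := fun j : ZMod L₂ => parB j = true) (q := fun k : ZMod L₃ => parB k = true)),
      Nat.card_prod, card_even he₂ (by omega), card_even he₃ (by omega)]
  have hfun : Nat.card (I → Bool) = 2 ^ ((L₂ / 2) * (L₃ / 2)) := by
    rw [Nat.card_fun, Nat.card_eq_fintype_card (α := Bool), Fintype.card_bool, hI]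
  have harith : L₂ * L₃ / 4 = (L₂ / 2) * (L₃ / 2) := by
    obtain ⟨a, rfl⟩ := he₂
    obtain ⟨b, rfl⟩ := he₃
    have h4 : (a + a) * (b + b) = 4 * (a * b) := by ring
    rw [h4, Nat.mul_div_cancel_left _ (by norm_num)]
    have : (a + a) / 2 = a := by omega
    have hb : (b + b) / 2 = b := by omega
    rw [this, hb]
  rw [← Nat.card_coe_set_eq, harith]
  rw [← hfun]
  exact hcard


end dset

end edges

end Q3P

/-- The number of 4-cycle decompositions of `Q³(L₁,L₂,L₃)`
(all `Lᵢ` even, `4 ≤ L₁ ≤ L₂ ≤ L₃`) is at least `2^(L₂L₃/4)`. -/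
theorem q3_decomp_count_lower (L₁ L₂ L₃ : ℕ)
    (he₁ : Even L₁) (he₂ : Even L₂) (he₃ : Even L₃)
    (h₁ : 4 ≤ L₁) (h₁₂ : L₁ ≤ L₂) (h₂₃ : L₂ ≤ L₃) :
    2 ^ (L₂ * L₃ / 4) ≤
      {D : Set (Set (Sym2 (QV L₁ L₂ L₃))) | IsFourCycleDecomp (Q3 L₁ L₂ L₃) D}.ncard := by
  exact Q3P.q3_decomp_count_lower' L₁ L₂ L₃ he₁ he₂ he₃ h₁ h₁₂ h₂₃
end

section
/- Count of full contractions bound: in the overlap ⟨↓|↑⟩ for a rotated column of length L₁ ≥ 2 (L₁ even), each of the 2L₁ annihilation operators can be contracted with at most 4 creation operators (its adjacent faces), so the number of nonvanishing full contractions, and hence |⟨↓|↑⟩|, is at most 4^{2L₁}; moreover for L₁ = 2 each face has only 3 adjacent faces among the creation operators, so |⟨↓|↑⟩| ≤ 3^{2L₁} < 4^{2L₁}. -/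
open MvPolynomial

/-!
Bosonic Fock space over the edge set `E`, modelled as `MvPolynomial E ℂ`:
the monomial `X^α` represents the state `∏ (b_e†)^(α e) |0⟩`, and the Fock space
inner product is `⟨X^α, X^β⟩ = α! δ_{αβ}` (so that `b_e† = X_e ·` and `b_e = ∂_e`
satisfy the canonical commutation relations).
-/

/-- The bosonic Fock space inner product on `MvPolynomial E ℂ`
(antilinear in the first argument). -/
noncomputable def wInner {E : Type*} [DecidableEq E] (p q : MvPolynomial E ℂ) : ℂ :=
  ∑ α ∈ p.support ∪ q.support,
    (∏ e ∈ α.support, (Nat.factorial (α e) : ℂ)) *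
      (starRingEnd ℂ) (MvPolynomial.coeff α p) * MvPolynomial.coeff α q

/-- The faces of a closed column of length `L`: at each height `i : ZMod L` there are
four faces `(i,0) = aᵢ`, `(i,1) = bᵢ`, `(i,2) = cᵢ`, `(i,3) = dᵢ` arranged in a ring. -/
abbrev ColFace (L : ℕ) := ZMod L × ZMod 4

/-- Adjacency of column faces (faces sharing exactly one edge): around the ring
`aᵢ - bᵢ - cᵢ - dᵢ - aᵢ` at the same height, and between consecutive heights for the
same letter. -/
def colAdj {L : ℕ} (f g : ColFace L) : Prop :=
  (f.1 = g.1 ∧ (g.2 = f.2 + 1 ∨ f.2 = g.2 + 1)) ∨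
  (f.2 = g.2 ∧ (g.1 = f.1 + 1 ∨ f.1 = g.1 + 1))

instance {L : ℕ} (f g : ColFace L) : Decidable (colAdj f g) := by
  unfold colAdj; infer_instance

/-- The faces occupied in the state `|↑⟩`: `aᵢ, cᵢ` for odd `i` and `bᵢ, dᵢ`
for even `i`. (`|↓⟩` occupies the complementary pattern.) -/
def upFace {L : ℕ} (f : ColFace L) : Prop :=
  (Odd f.1.val ∧ (f.2 = 0 ∨ f.2 = 2)) ∨ (Even f.1.val ∧ (f.2 = 1 ∨ f.2 = 3))

instance {L : ℕ} (f : ColFace L) : Decidable (upFace f) := by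
  unfold upFace; infer_instance

/-- The face creation operator applied to the vacuum:
`b_f† |0⟩ = ∑ e σ_f(e) b_e† |0⟩` for the signed (±1) indicator `σ f` of the four
edges of the face `f`. -/
noncomputable def facePoly {E : Type*} [Fintype E] {L : ℕ}
    (σ : ColFace L → E → ℤ) (f : ColFace L) : MvPolynomial E ℂ :=
  ∑ e : E, (σ f e : ℂ) • X e

/-- The state `|↑⟩ = ∏_{i odd} aᵢ† cᵢ† ∏_{i even} bᵢ† dᵢ† |0⟩`. -/
noncomputable def upState {E : Type*} [Fintype E] {L : ℕ} [NeZero L]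
    (σ : ColFace L → E → ℤ) : MvPolynomial E ℂ :=
  ∏ f ∈ Finset.univ.filter (fun f : ColFace L => upFace f), facePoly σ f

/-- The state `|↓⟩ = ∏_{i odd} bᵢ† dᵢ† ∏_{i even} aᵢ† cᵢ† |0⟩`. -/
noncomputable def downState {E : Type*} [Fintype E] {L : ℕ} [NeZero L]
    (σ : ColFace L → E → ℤ) : MvPolynomial E ℂ :=
  ∏ f ∈ Finset.univ.filter (fun f : ColFace L => ¬ upFace f), facePoly σ f

/-!
Write `ℓ(u) = ∑ₑ uₑ Xₑ` for the creation operator of `u : E → ℂ`. Since `⟨Xₑ p, q⟩ = ⟨p, ∂ₑ q⟩`,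
the adjoint of multiplication by `ℓ(u)` is the derivation `∑ₑ conj uₑ ∂ₑ`, so moving one factor of
`⟨∏_{f ∈ S} ℓ(u f), ∏_{g ∈ T} ℓ(v g)⟩` to the right and applying the Leibniz rule gives the Wick
expansion `∑_{g ∈ T} ⟨u f, v g⟩ ⟨∏_{S ∖ f}, ∏_{T ∖ g}⟩`. By induction the overlap is at most
`C ^ #S` when every contraction has norm `≤ 1` and each `f` has at most `C` nonvanishing ones.
For the column, a contraction between distinct faces is `-1` for adjacent faces and `0`
otherwise, a face has at most 4 neighbours (3 when `L = 2`, where the faces above and below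
coincide), and `|↓⟩` has `2L` faces.
-/

open Finset

section FockInner

variable {E : Type*}

noncomputable def fockWeight (α : E →₀ ℕ) : ℂ := α.prod fun _ n => (n.factorial : ℂ)

theorem fockWeight_add_single (α : E →₀ ℕ) (e : E) :
    fockWeight (α + Finsupp.single e 1) = (α e + 1) * fockWeight α := by
  have h := Finsupp.mul_prod_erase' (α + Finsupp.single e 1) e
    (fun _ n => (n.factorial : ℂ)) fun _ => by simp
  have h' := Finsupp.mul_prod_erase' α e (fun _ n => (n.factorial : ℂ)) fun _ => by simp
  rw [Finsupp.erase_add, Finsupp.erase_single, add_zero] at h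
  rw [fockWeight, fockWeight, ← h, ← h']
  simp only [Finsupp.coe_add, Pi.add_apply, Finsupp.single_eq_same, Nat.factorial_succ,
    Nat.cast_mul, Nat.cast_add, Nat.cast_one]
  ring

variable [DecidableEq E]

theorem wInner_eq_sum_of_support_subset_left {p : MvPolynomial E ℂ} (q : MvPolynomial E ℂ)
    {s : Finset (E →₀ ℕ)} (hs : p.support ⊆ s) :
    wInner p q = ∑ α ∈ s, fockWeight α * starRingEnd ℂ (coeff α p) * coeff α q := by
  have hvan : ∀ α ∉ p.support, fockWeight α * starRingEnd ℂ (coeff α p) * coeff α q = 0 := by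
    intro α hα
    simp [MvPolynomial.notMem_support_iff.1 hα]
  exact (sum_subset subset_union_left fun α _ hα => hvan α hα).symm.trans
    (sum_subset hs fun α _ hα => hvan α hα)

theorem wInner_eq_sum_of_support_subset_right (p : MvPolynomial E ℂ) {q : MvPolynomial E ℂ}
    {s : Finset (E →₀ ℕ)} (hs : q.support ⊆ s) :
    wInner p q = ∑ α ∈ s, fockWeight α * starRingEnd ℂ (coeff α p) * coeff α q := by
  have hvan : ∀ α ∉ q.support, fockWeight α * starRingEnd ℂ (coeff α p) * coeff α q = 0 := by
    intro α hα
    simp [MvPolynomial.notMem_support_iff.1 hα]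
  exact (sum_subset subset_union_right fun α _ hα => hvan α hα).symm.trans
    (sum_subset hs fun α _ hα => hvan α hα)

theorem wInner_add_left (p q r : MvPolynomial E ℂ) :
    wInner (p + q) r = wInner p r + wInner q r := by
  simp only [wInner_eq_sum_of_support_subset_right _ (subset_refl r.support), coeff_add,
    map_add, mul_add, add_mul, sum_add_distrib]

theorem wInner_add_right (p q r : MvPolynomial E ℂ) :
    wInner p (q + r) = wInner p q + wInner p r := by
  simp only [wInner_eq_sum_of_support_subset_left _ (subset_refl p.support), coeff_add,
    mul_add, sum_add_distrib]

theorem wInner_smul_left (c : ℂ) (p q : MvPolynomial E ℂ) :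
    wInner (c • p) q = starRingEnd ℂ c * wInner p q := by
  simp only [wInner_eq_sum_of_support_subset_right _ (subset_refl q.support), coeff_smul,
    smul_eq_mul, map_mul, mul_sum]
  exact sum_congr rfl fun _ _ => by ring

theorem wInner_smul_right (c : ℂ) (p q : MvPolynomial E ℂ) :
    wInner p (c • q) = c * wInner p q := by
  simp only [wInner_eq_sum_of_support_subset_left _ (subset_refl p.support), coeff_smul,
    smul_eq_mul, mul_sum]
  exact sum_congr rfl fun _ _ => by ring

theorem wInner_sum_left {ι : Type*} (s : Finset ι) (p : ι → MvPolynomial E ℂ)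
    (q : MvPolynomial E ℂ) : wInner (∑ i ∈ s, p i) q = ∑ i ∈ s, wInner (p i) q :=
  map_sum (AddMonoidHom.mk' (wInner · q) (wInner_add_left · · q)) p s

theorem wInner_sum_right {ι : Type*} (p : MvPolynomial E ℂ) (s : Finset ι)
    (q : ι → MvPolynomial E ℂ) : wInner p (∑ i ∈ s, q i) = ∑ i ∈ s, wInner p (q i) :=
  map_sum (AddMonoidHom.mk' (wInner p) (wInner_add_right p)) q s

theorem wInner_monomial_monomial (α β : E →₀ ℕ) (c d : ℂ) :
    wInner (monomial α c) (monomial β d) =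
      if α = β then fockWeight α * starRingEnd ℂ c * d else 0 := by
  rw [wInner_eq_sum_of_support_subset_left _ support_monomial_subset, sum_singleton,
    coeff_monomial, coeff_monomial, if_pos rfl]
  by_cases h : α = β
  · subst h; simp
  · simp [h, Ne.symm h]

theorem wInner_one_left (q : MvPolynomial E ℂ) : wInner 1 q = constantCoeff q := by
  have h1 : (1 : MvPolynomial E ℂ).support ⊆ {0} := by
    rw [← C_1, ← monomial_zero']
    exact support_monomial_subset
  rw [wInner_eq_sum_of_support_subset_left q h1, sum_singleton]
  simp [fockWeight, constantCoeff_eq]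

theorem wInner_X_mul_monomial_monomial (e : E) (β γ : E →₀ ℕ) (c d : ℂ) :
    wInner (X e * monomial β c) (monomial γ d) =
      wInner (monomial β c) (pderiv e (monomial γ d)) := by
  rw [X, monomial_mul, one_mul, add_comm, pderiv_monomial, wInner_monomial_monomial,
    wInner_monomial_monomial]
  by_cases h : β + Finsupp.single e 1 = γ
  · subst h
    simp only [↓reduceIte, fockWeight_add_single, add_tsub_cancel_right, Finsupp.coe_add,
      Pi.add_apply, Finsupp.single_eq_same, Nat.cast_add, Nat.cast_one]
    ring
  · rw [if_neg h]
    split_ifs with h'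
    · have : γ e = 0 := by
        by_contra hγ
        exact h (h' ▸ tsub_add_cancel_of_le (Finsupp.single_le_iff.2 (by omega)))
      simp [this]
    · rfl

theorem wInner_X_mul (e : E) (p q : MvPolynomial E ℂ) :
    wInner (X e * p) q = wInner p (pderiv e q) := by
  induction p using MvPolynomial.induction_on' with
  | monomial β c =>
    induction q using MvPolynomial.induction_on' with
    | monomial γ d => exact wInner_X_mul_monomial_monomial e β γ c d
    | add q r hq hr => rw [map_add, wInner_add_right, wInner_add_right, hq, hr]
  | add p p' hp hp' => rw [mul_add, wInner_add_left, wInner_add_left, hp, hp']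

end FockInner

theorem Derivation.map_finset_prod {R A M ι : Type*} [CommSemiring R] [CommSemiring A]
    [AddCommMonoid M] [Algebra R A] [Module A M] [Module R M] [IsScalarTower R A M]
    [DecidableEq ι] (D : Derivation R A M) (s : Finset ι) (f : ι → A) :
    D (∏ i ∈ s, f i) = ∑ i ∈ s, (∏ j ∈ s.erase i, f j) • D (f i) := by
  induction s using Finset.induction_on with
  | empty => simp
  | insert a s ha ih =>
    rw [prod_insert ha, D.leibniz, ih, sum_insert ha, erase_insert ha, smul_sum, add_comm]
    congr 1
    refine sum_congr rfl fun i hi => ?_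
    rw [erase_insert_of_ne (ne_of_mem_of_not_mem hi ha).symm,
      prod_insert fun h => ha (mem_of_mem_erase h), mul_smul]

section Wick

variable {E : Type*} [Fintype E]

noncomputable def linearPoly (u : E → ℂ) : MvPolynomial E ℂ := ∑ e, u e • X e

noncomputable def annihilation (u : E → ℂ) :
    Derivation ℂ (MvPolynomial E ℂ) (MvPolynomial E ℂ) :=
  ∑ e, star (u e) • pderiv e

theorem annihilation_apply (u : E → ℂ) (p : MvPolynomial E ℂ) :
    annihilation u p = ∑ e, star (u e) • pderiv e p := by
  rw [annihilation, ← Derivation.coeFnAddMonoidHom_apply, map_sum, Finset.sum_apply]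
  rfl

theorem constantCoeff_linearPoly (u : E → ℂ) : constantCoeff (linearPoly u) = 0 := by
  simp [linearPoly]

variable [DecidableEq E]

theorem annihilation_linearPoly (u v : E → ℂ) :
    annihilation u (linearPoly v) = C (star u ⬝ᵥ v) := by
  simp [annihilation_apply, linearPoly, pderiv_X, Pi.single_apply, dotProduct, smul_eq_C_mul,
    mul_comm]

theorem wInner_linearPoly_mul (u : E → ℂ) (p q : MvPolynomial E ℂ) :
    wInner (linearPoly u * p) q = wInner p (annihilation u q) := by
  simp only [linearPoly, sum_mul, smul_mul_assoc, wInner_sum_left, wInner_smul_left,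
    wInner_X_mul, annihilation_apply, wInner_sum_right, wInner_smul_right]
  rfl

theorem annihilation_prod_linearPoly {ι : Type*} [DecidableEq ι] (u : E → ℂ) (v : ι → E → ℂ)
    (T : Finset ι) :
    annihilation u (∏ g ∈ T, linearPoly (v g)) =
      ∑ g ∈ T, (star u ⬝ᵥ v g) • ∏ h ∈ T.erase g, linearPoly (v h) := by
  rw [Derivation.map_finset_prod]
  refine sum_congr rfl fun g _ => ?_
  rw [annihilation_linearPoly, smul_eq_mul, smul_eq_C_mul, mul_comm]

theorem wInner_linearPoly_mul_prod {ι : Type*} [DecidableEq ι] (u : E → ℂ) (v : ι → E → ℂ)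
    (p : MvPolynomial E ℂ) (T : Finset ι) :
    wInner (linearPoly u * p) (∏ g ∈ T, linearPoly (v g)) =
      ∑ g ∈ T, (star u ⬝ᵥ v g) * wInner p (∏ h ∈ T.erase g, linearPoly (v h)) := by
  simp only [wInner_linearPoly_mul, annihilation_prod_linearPoly, wInner_sum_right,
    wInner_smul_right]

theorem norm_wInner_one_prod_linearPoly_le_one {ι : Type*} (v : ι → E → ℂ) (T : Finset ι) :
    ‖wInner 1 (∏ g ∈ T, linearPoly (v g))‖ ≤ 1 := by
  simp only [wInner_one_left, map_prod, constantCoeff_linearPoly, prod_const, norm_pow,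
    norm_zero]
  exact pow_le_one₀ le_rfl zero_le_one

theorem norm_wInner_prod_linearPoly_le {ι : Type*} [DecidableEq ι] (u v : ι → E → ℂ) (C : ℕ)
    (S T : Finset ι) (hle : ∀ f ∈ S, ∀ g ∈ T, ‖star (u f) ⬝ᵥ v g‖ ≤ 1)
    (hcount : ∀ f ∈ S, #{g ∈ T | star (u f) ⬝ᵥ v g ≠ 0} ≤ C) :
    ‖wInner (∏ f ∈ S, linearPoly (u f)) (∏ g ∈ T, linearPoly (v g))‖ ≤ (C : ℝ) ^ #S := by
  induction S using Finset.induction_on generalizing T with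
  | empty => simpa using norm_wInner_one_prod_linearPoly_le_one v T
  | insert a S ha ih =>
    set w : ι → ℂ := fun g =>
      wInner (∏ f ∈ S, linearPoly (u f)) (∏ h ∈ T.erase g, linearPoly (v h))
    have hw : ∀ g ∈ T, ‖w g‖ ≤ (C : ℝ) ^ #S := fun g _ =>
      ih (T.erase g) (fun f hf g' hg' => hle f (mem_insert_of_mem hf) g' (mem_of_mem_erase hg'))
        fun f hf => (card_le_card (filter_subset_filter _ (erase_subset g T))).trans
          (hcount f (mem_insert_of_mem hf))
    calc ‖wInner (∏ f ∈ insert a S, linearPoly (u f)) (∏ g ∈ T, linearPoly (v g))‖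
        = ‖∑ g ∈ T with star (u a) ⬝ᵥ v g ≠ 0, (star (u a) ⬝ᵥ v g) * w g‖ := by
          rw [prod_insert ha, wInner_linearPoly_mul_prod,
            sum_filter_of_ne fun g _ h => left_ne_zero_of_mul h]
      _ ≤ ∑ g ∈ T with star (u a) ⬝ᵥ v g ≠ 0, 1 * (C : ℝ) ^ #S := by
          refine norm_sum_le_of_le _ fun g hg => ?_
          have hgT := (mem_filter.1 hg).1
          rw [norm_mul]
          exact mul_le_mul (hle a (mem_insert_self a S) g hgT) (hw g hgT) (norm_nonneg _)
            zero_le_one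
      _ ≤ C * (C : ℝ) ^ #S := by
          rw [sum_const, nsmul_eq_mul, one_mul]
          gcongr
          exact_mod_cast hcount a (mem_insert_self a S)
      _ = (C : ℝ) ^ #(insert a S) := by rw [card_insert_of_notMem ha, pow_succ']

end Wick

section ColumnFaces

variable {L : ℕ}

theorem upFace_add_one_iff (f : ColFace L) : upFace (f.1, f.2 + 1) ↔ ¬ upFace f := by
  obtain ⟨i, j⟩ := f
  rcases Nat.even_or_odd i.val with h | h
  · simp only [upFace, h, ← Nat.not_even_iff_odd]
    revert j; decide
  · simp only [upFace, h, ← Nat.not_odd_iff_even]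
    revert j; decide

variable [NeZero L]

theorem filter_colAdj_subset (f : ColFace L) :
    ({g | colAdj f g} : Finset (ColFace L)) ⊆
      {(f.1, f.2 + 1), (f.1, f.2 - 1), (f.1 + 1, f.2), (f.1 - 1, f.2)} := by
  intro g hg
  simp only [mem_filter, mem_univ, true_and] at hg
  simp only [mem_insert, mem_singleton]
  rcases hg with ⟨h1, h2 | h2⟩ | ⟨h1, h2 | h2⟩
  · exact Or.inl (Prod.ext h1.symm h2)
  · exact Or.inr (Or.inl (Prod.ext h1.symm (eq_sub_of_add_eq h2.symm)))
  · exact Or.inr (Or.inr (Or.inl (Prod.ext h2 h1.symm)))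
  · exact Or.inr (Or.inr (Or.inr (Prod.ext (eq_sub_of_add_eq h2.symm) h1.symm)))

theorem card_filter_colAdj_le_four (f : ColFace L) : #{g | colAdj f g} ≤ 4 :=
  (card_le_card (filter_colAdj_subset f)).trans card_le_four

theorem card_filter_colAdj_le_three (f : ColFace 2) : #{g | colAdj f g} ≤ 3 := by
  have h := filter_colAdj_subset f
  rw [sub_eq_add_neg f.1, ZMod.neg_eq_self_mod_two, pair_eq_singleton] at h
  exact (card_le_card h).trans card_le_three

theorem card_filter_not_upFace : #{f : ColFace L | ¬ upFace f} = 2 * L := by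
  have hshift : #{f : ColFace L | ¬ upFace f} = #{f : ColFace L | upFace f} := by
    refine card_nbij' (fun f => (f.1, f.2 + 1)) (fun f => (f.1, f.2 - 1)) ?_ ?_ ?_ ?_ <;>
      intro f <;> simp only [coe_filter, mem_univ, true_and, Set.mem_ofPred_eq]
    · exact (upFace_add_one_iff f).2
    · simpa using (upFace_add_one_iff (f.1, f.2 - 1)).1
    · simp
    · simp
  have htot := card_filter_add_card_filter_not (s := univ) fun f : ColFace L => upFace f
  rw [card_univ, Fintype.card_prod, ZMod.card, ZMod.card] at htot
  omega

end ColumnFaces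

theorem norm_wInner_downState_upState_le {E : Type*} [Fintype E] [DecidableEq E] {L : ℕ}
    [NeZero L] (σ : ColFace L → E → ℤ)
    (hcomm : ∀ f g : ColFace L, (∑ e : E, σ f e * σ g e) =
      if f = g then 4 else if colAdj f g then -1 else 0)
    (C : ℕ) (hC : ∀ f : ColFace L, #{g | colAdj f g} ≤ C) :
    ‖wInner (downState σ) (upState σ)‖ ≤ (C : ℝ) ^ (2 * L) := by
  set v : ColFace L → E → ℂ := fun f e => σ f e
  have hdot (f g : ColFace L) :
      star (v f) ⬝ᵥ v g = if f = g then 4 else if colAdj f g then -1 else 0 := by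
    have := congrArg (Int.cast : ℤ → ℂ) (hcomm f g)
    push_cast at this
    simpa [v, dotProduct] using this
  have hne {f g : ColFace L} (hf : f ∈ ({f | ¬ upFace f} : Finset _))
      (hg : g ∈ ({g | upFace g} : Finset _)) : f ≠ g := by
    rintro rfl
    simp_all
  rw [← card_filter_not_upFace]
  refine norm_wInner_prod_linearPoly_le v v C _ _ (fun f hf g hg => ?_) (fun f hf => ?_)
  · rw [hdot, if_neg (hne hf hg)]
    split_ifs <;> simp
  · refine (card_le_card fun g hg => ?_).trans (hC f)
    obtain ⟨hgT, hfg⟩ := mem_filter.1 hg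
    rw [hdot, if_neg (hne hf hgT)] at hfg
    simp only [mem_filter, mem_univ, true_and]
    by_contra hadj
    exact hfg (if_neg hadj)

theorem column_overlap_bound_general {E : Type*} [Fintype E] [DecidableEq E]
    (L : ℕ) [NeZero L]
    (σ : ColFace L → E → ℤ)
    (hcomm : ∀ f g : ColFace L, (∑ e : E, σ f e * σ g e) =
      if f = g then 4 else if colAdj f g then -1 else 0) :
    ‖wInner (downState σ) (upState σ)‖ ≤ 4 ^ (2 * L) ∧
    (L = 2 → ‖wInner (downState σ) (upState σ)‖ ≤ 3 ^ (2 * L)) ∧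
    (3 : ℝ) ^ (2 * L) < 4 ^ (2 * L) := by
  refine ⟨?_, fun hL => ?_, pow_lt_pow_left₀ (by norm_num) (by norm_num) (by simp [NeZero.ne L])⟩
  · exact_mod_cast norm_wInner_downState_upState_le σ hcomm 4 card_filter_colAdj_le_four
  · subst hL
    exact_mod_cast norm_wInner_downState_upState_le σ hcomm 3 card_filter_colAdj_le_three

/-- Counting full Wick contractions in the overlap `⟨↓|↑⟩` for a rotated
closed column of length `L₁ ≥ 2` (`L₁` even): each of the `2L₁` annihilation operators
can only be contracted with the (at most 4) creation operators of adjacent faces, each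
contraction contributing `-1`, so `|⟨↓|↑⟩| ≤ 4^(2L₁)`; moreover for `L₁ = 2` each face
has only 3 adjacent faces among the created ones, so `|⟨↓|↑⟩| ≤ 3^(2L₁) < 4^(2L₁)`. -/
theorem column_overlap_bound {E : Type*} [Fintype E] [DecidableEq E]
    (L : ℕ) [NeZero L] (hL : Even L) (hL2 : 2 ≤ L)
    (σ : ColFace L → E → ℤ)
    (hval : ∀ f e, σ f e = -1 ∨ σ f e = 0 ∨ σ f e = 1)
    (hsupp : ∀ f, ({e | σ f e ≠ 0} : Set E).ncard = 4)
    (hcomm : ∀ f g : ColFace L, (∑ e : E, σ f e * σ g e) =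
      if f = g then 4 else if colAdj f g then -1 else 0) :
    ‖wInner (downState σ) (upState σ)‖ ≤ 4 ^ (2 * L) ∧
    (L = 2 → ‖wInner (downState σ) (upState σ)‖ ≤ 3 ^ (2 * L)) ∧
    (3 : ℝ) ^ (2 * L) < 4 ^ (2 * L) :=
  column_overlap_bound_general L σ hcomm
end
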